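/- For every colored multigraph G, every d ∈ ℕ∞, every d-substitution ρ on G, and every node v ∈ G, we have colr^d(G)(v) = colr^d(G/ρ)(ρ(v)). -/

import Mathlib

/-!
Color refinement on `G/ρ` tracks color refinement on `G`. By induction on `k ≤ d + 1`, the
depth-`k` color of the node `ρ v` of `G/ρ` is its depth-`k` color in `G`: the node `ρ v` of
`G/ρ` receives from each representative exactly the edges that its `d`-class sends to `ρ v` in
`G`, and for `k ≤ d` the members of a `d`-class share their depth-`k` color. For `d = ∞`,
stability of `G` at `d` turns this into an agreement of the colorings of depth up to `d + 1`,
so `G` and `G/ρ` also stabilize at the same depth.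
-/

open Classical

/-- The multiset of incoming neighbors of `v` in the multigraph with edge
multiplicity function `E` (with `E w v` the multiplicity of edge `w → v`). -/
def inc {V : Type*} [Fintype V] (E : V → V → ℕ) (v : V) : Multiset V :=
  Finset.univ.val.bind fun w => Multiset.replicate (E w v) w

/-- Cap all multiplicities of a multiset at `c ∈ ℕ∞`. -/
noncomputable def capM {α : Type*} (c : ℕ∞) (M : Multiset α) : Multiset α :=
  letI := Classical.decEq α
  M.toFinset.val.bind fun x => Multiset.replicate ((min (M.count x : ℕ∞) c).toNat) x

/-- The type of colors obtained after `d` steps of color refinement, starting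
from base colors in `Y`: a depth-`d` color is the previous color paired with the
multiset of previous colors of the incoming neighbors. -/
def CRt (Y : Type*) : ℕ → Type _
  | 0 => Y
  | (d+1) => CRt Y d × Multiset (CRt Y d)

/-- `d` steps of color refinement, starting from base coloring `g`. -/
def colr {V : Type*} [Fintype V] {Y : Type*} (E : V → V → ℕ) (g : V → Y) :
    (d : ℕ) → V → CRt Y d
  | 0 => g
  | (d+1) => fun v => (colr E g d v, (inc E v).map (colr E g d))

/-- `d` steps of `c`-graded color refinement. -/
noncomputable def colrC {V : Type*} [Fintype V] {Y : Type*} (c : ℕ∞) (E : V → V → ℕ)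
    (g : V → Y) : (d : ℕ) → V → CRt Y d
  | 0 => g
  | (d+1) => fun v => (colrC c E g d v, capM c ((inc E v).map (colrC c E g d)))

/-- The partition induced by `d` refinement steps is stable at `d`. -/
def stableAt {V : Type*} [Fintype V] {Y : Type*} (E : V → V → ℕ) (g : V → Y) (d : ℕ) : Prop :=
  ∀ v w : V, colr E g d v = colr E g d w ↔ colr E g (d+1) v = colr E g (d+1) w

/-- The stable coloring number: least depth at which color refinement stabilizes. -/
noncomputable def stableNum {V : Type*} [Fintype V] {Y : Type*} (E : V → V → ℕ) (g : V → Y) : ℕ :=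
  sInf { d | stableAt E g d }

/-- The stable coloring `colr^∞`. -/
noncomputable def colrInf {V : Type*} [Fintype V] {Y : Type*} (E : V → V → ℕ) (g : V → Y) :
    V → CRt Y (stableNum E g) :=
  colr E g (stableNum E g)

/-- The depth (number of refinement rounds) corresponding to `d ∈ ℕ∞`:
for `d = ∞` it is the stable coloring number of the graph. -/
noncomputable def edepth {V : Type*} [Fintype V] {Y : Type*} (E : V → V → ℕ) (g : V → Y)
    (d : ℕ∞) : ℕ :=
  d.untopD (stableNum E g)

/-- Color refinement with depth `d ∈ ℕ∞` (stable coloring for `d = ∞`). -/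
noncomputable def colrE' {V : Type*} [Fintype V] {Y : Type*} (E : V → V → ℕ) (g : V → Y)
    (d : ℕ∞) : V → CRt Y (edepth E g d) :=
  colr E g (edepth E g d)

/-- A substitution choosing one representative per class of the coloring `col`:
`ρ v` is in the class of `v`, and `ρ` is constant on classes. -/
def IsSubstWith {V : Type*} {C : Type*} (col : V → C) (ρ : V → V) : Prop :=
  (∀ v, col (ρ v) = col v) ∧ ∀ v w, col v = col w → ρ v = ρ w

/-- Node set of the reduction: the chosen representatives. -/
def RNodes {V : Type*} (ρ : V → V) : Type _ := { v : V // ∃ u, ρ u = v }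

noncomputable instance {V : Type*} [Fintype V] (ρ : V → V) : Fintype (RNodes ρ) := by
  unfold RNodes; exact Subtype.fintype _

instance {V : Type*} [DecidableEq V] (ρ : V → V) : DecidableEq (RNodes ρ) := by
  unfold RNodes; infer_instance

/-- Edge multiplicities of the reduction: `E'(v → w) = Σ_{v' ∈ [v]} E(v' → w)`. -/
noncomputable def reductE {V : Type*} [Fintype V] {C : Type*} (E : V → V → ℕ) (col : V → C)
    (ρ : V → V) (a b : RNodes ρ) : ℕ :=
  ∑ v' ∈ Finset.univ.filter (fun v' => col v' = col a.val), E v' b.val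

/-- Edge multiplicities of the `c`-graded reduction:
`E'(v → w) = min(Σ_{v' ∈ [v]} min(E(v' → w), c), c)`. -/
noncomputable def reductEC {V : Type*} [Fintype V] {C : Type*} (c : ℕ∞) (E : V → V → ℕ)
    (col : V → C) (ρ : V → V) (a b : RNodes ρ) : ℕ :=
  (min (↑(∑ v' ∈ Finset.univ.filter (fun v' => col v' = col a.val),
      (min (E v' b.val : ℕ∞) c).toNat) : ℕ∞) c).toNat

/-- Coloring of the reduction: colors are inherited. -/
def reductG {V : Type*} {Y : Type*} (g : V → Y) (ρ : V → V) (a : RNodes ρ) : Y := g a.val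

/-- A GNN layer of input dimension `p` and output dimension `q`. -/
structure GNNLayer (p q : ℕ) where
  h : ℕ
  agg : Multiset (Fin p → ℝ) → (Fin h → ℝ)
  comb : (Fin p → ℝ) → (Fin h → ℝ) → (Fin q → ℝ)

/-- The feature map transformer computed by a GNN layer. -/
def GNNLayer.apply {p q : ℕ} (L : GNNLayer p q) {V : Type*} [Fintype V]
    (E : V → V → ℕ) (g : V → Fin p → ℝ) : V → Fin q → ℝ :=
  fun v => L.comb (g v) (L.agg ((inc E v).map g))

/-- A GNN: a nonempty sequence of layers with matching dimensions. -/
inductive GNN : ℕ → ℕ → Type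
  | single : ∀ {p q}, GNNLayer p q → GNN p q
  | cons : ∀ {p r q}, GNNLayer p r → GNN r q → GNN p q

/-- Number of layers of a GNN. -/
def GNN.depth : ∀ {p q}, GNN p q → ℕ
  | _, _, .single _ => 1
  | _, _, .cons _ rest => rest.depth + 1

/-- The feature map transformer computed by a GNN. -/
def GNN.apply {V : Type*} [Fintype V] : ∀ {p q}, GNN p q → (V → V → ℕ) →
    (V → Fin p → ℝ) → V → Fin q → ℝ
  | _, _, .single L, E, g => L.apply E g
  | _, _, .cons L rest, E, g => rest.apply E (L.apply E g)

/-- A GNN layer has width `c` if its aggregation only depends on multiplicities up to `c`. -/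
def GNNLayer.HasWidth {p q : ℕ} (c : ℕ∞) (L : GNNLayer p q) : Prop :=
  ∀ M, L.agg M = L.agg (capM c M)

/-- A GNN has width `c` if all its layers do. -/
def GNN.HasWidth (c : ℕ∞) : ∀ {p q}, GNN p q → Prop
  | _, _, .single L => L.HasWidth c
  | _, _, .cons L rest => L.HasWidth c ∧ rest.HasWidth c

section ColorRefinement

variable {V Y : Type*} [Fintype V] (E : V → V → ℕ) (g : V → Y)

theorem colr_eq_of_le {m k : ℕ} (h : m ≤ k) {v w : V}
    (hk : colr E g k v = colr E g k w) : colr E g m v = colr E g m w := by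
  induction k with
  | zero => rwa [Nat.le_zero.mp h]
  | succ k ih =>
    obtain h | rfl := h.lt_or_eq
    · exact ih (Nat.lt_succ_iff.mp h) (congrArg Prod.fst hk)
    · exact hk

theorem count_map_inc {α : Type*} (c : V → α) (u : V) (x : α) :
    ((inc E u).map c).count x = ∑ w, if c w = x then E w u else 0 := by
  simp only [inc, Multiset.map_bind, Multiset.count_bind, Multiset.map_replicate,
    Multiset.count_replicate, Finset.sum]

theorem range_colr_eq_image_fst (k : ℕ) :
    Set.range (colr E g k) = (fun x : CRt Y (k + 1) => x.1) '' Set.range (colr E g (k + 1)) := by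
  rw [← Set.range_comp]
  rfl

theorem stableAt_iff_injOn_fst (k : ℕ) :
    stableAt E g k ↔ Set.InjOn (fun x : CRt Y (k + 1) => x.1) (Set.range (colr E g (k + 1))) := by
  simp only [Set.InjOn, Set.forall_mem_range]
  exact forall₂_congr fun v w => ⟨fun h => h.mp, fun h => ⟨h, congrArg Prod.fst⟩⟩

theorem ncard_range_colr_lt_of_not_stableAt {k : ℕ} (hk : ¬ stableAt E g k) :
    (Set.range (colr E g k)).ncard < (Set.range (colr E g (k + 1))).ncard := by
  rw [range_colr_eq_image_fst]
  refine (Set.ncard_image_le (Set.finite_range _)).lt_of_ne fun h => hk ?_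
  exact (stableAt_iff_injOn_fst E g k).mpr (Set.injOn_of_ncard_image_eq h (Set.finite_range _))

/-- Each non-stable round strictly increases the number of colors, which is at most `|V|`. -/
theorem exists_stableAt : ∃ k, stableAt E g k := by
  by_contra! h
  have hmono : StrictMono fun k => (Set.range (colr E g k)).ncard :=
    strictMono_nat_of_lt_succ fun k => ncard_range_colr_lt_of_not_stableAt E g (h k)
  have hcard : (Set.range (colr E g (Fintype.card V + 1))).ncard ≤ Fintype.card V := by
    rw [← Set.image_univ, ← Nat.card_eq_fintype_card, ← Set.ncard_univ]
    exact Set.ncard_image_le Set.finite_univ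
  have := hmono.le_apply (x := Fintype.card V + 1)
  omega

@[simp]
theorem edepth_coe (n : ℕ) : edepth E g n = n := rfl

@[simp]
theorem edepth_top : edepth E g ⊤ = stableNum E g := rfl

theorem stableAt_stableNum : stableAt E g (stableNum E g) :=
  Nat.sInf_mem (exists_stableAt E g)

theorem stableAt_iff_of_surjective {W : Type*} [Fintype W] (E' : W → W → ℕ) (g' : W → Y)
    {f : V → W} (hf : Function.Surjective f) {k : ℕ}
    (hk : ∀ v, colr E' g' k (f v) = colr E g k v)
    (hk' : ∀ v, colr E' g' (k + 1) (f v) = colr E g (k + 1) v) :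
    stableAt E' g' k ↔ stableAt E g k := by
  simp only [stableAt, hf.forall, hk, hk']

theorem stableNum_eq_of_stableAt_iff {W : Type*} [Fintype W] (E' : W → W → ℕ) (g' : W → Y)
    (h : ∀ k ≤ stableNum E g, stableAt E' g' k ↔ stableAt E g k) :
    stableNum E' g' = stableNum E g := by
  have hD : stableAt E' g' (stableNum E g) := (h _ le_rfl).mpr (stableAt_stableNum E g)
  have hD' : stableNum E' g' ≤ stableNum E g := Nat.sInf_le hD
  have hstable : stableAt E' g' (stableNum E' g') :=
    Nat.sInf_mem (s := {k | stableAt E' g' k}) ⟨_, hD⟩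
  exact hD'.antisymm (Nat.sInf_le ((h _ hD').mp hstable))

end ColorRefinement

section Reduction

variable {V : Type*}

def toRNodes (ρ : V → V) (v : V) : RNodes ρ := ⟨ρ v, v, rfl⟩

theorem toRNodes_surjective (ρ : V → V) : Function.Surjective (toRNodes ρ) :=
  fun ⟨_, u, hu⟩ => ⟨u, Subtype.ext hu⟩

variable {C : Type*} {col : V → C} {ρ : V → V}

theorem IsSubstWith.apply_apply (hρ : IsSubstWith col ρ) (u : V) : ρ (ρ u) = ρ u :=
  hρ.2 _ _ (hρ.1 u)

theorem IsSubstWith.apply_val (hρ : IsSubstWith col ρ) (a : RNodes ρ) : ρ a.val = a.val := by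
  obtain ⟨_, u, rfl⟩ := a
  exact hρ.apply_apply u

theorem IsSubstWith.toRNodes_val (hρ : IsSubstWith col ρ) (a : RNodes ρ) :
    toRNodes ρ a.val = a :=
  Subtype.ext (hρ.apply_val a)

theorem IsSubstWith.toRNodes_eq_iff (hρ : IsSubstWith col ρ) (w : V) (a : RNodes ρ) :
    toRNodes ρ w = a ↔ col w = col a.val := by
  refine ⟨fun h => ?_, fun h => ?_⟩
  · rw [← h, toRNodes, hρ.1]
  · rw [← hρ.toRNodes_val a]
    exact Subtype.ext (hρ.2 w a.val h)

theorem IsSubstWith.map_inc_reductE [Fintype V] (hρ : IsSubstWith col ρ) (E : V → V → ℕ)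
    {α : Type*} {c : V → α} (hc : ∀ v w, col v = col w → c v = c w) (u : V) :
    (inc (reductE E col ρ) (toRNodes ρ u)).map (fun a : RNodes ρ => c a.val) =
      (inc E (ρ u)).map c := by
  ext x
  rw [count_map_inc, count_map_inc, ← Finset.sum_fiberwise Finset.univ (toRNodes ρ)]
  refine Finset.sum_congr rfl fun a _ => ?_
  rw [Finset.filter_congr fun w _ => hρ.toRNodes_eq_iff w a]
  have hfiber : ∀ w ∈ Finset.univ.filter (fun w => col w = col a.val), c w = c a.val :=
    fun w hw => hc w a.val (Finset.mem_filter.mp hw).2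
  split_ifs with hx
  · exact Finset.sum_congr rfl fun w hw => (if_pos ((hfiber w hw).trans hx)).symm
  · exact (Finset.sum_eq_zero fun w hw => if_neg fun h => hx ((hfiber w hw).symm.trans h)).symm

end Reduction

section ReducedColorRefinement

variable {V Y : Type*} [Fintype V] (E : V → V → ℕ) (g : V → Y) {D : ℕ} {ρ : V → V}

theorem IsSubstWith.colr_reduct_toRNodes (hρ : IsSubstWith (colr E g D) ρ) {k : ℕ}
    (hk : k ≤ D + 1) (v : V) :
    colr (reductE E (colr E g D) ρ) (reductG g ρ) k (toRNodes ρ v) = colr E g k (ρ v) := by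
  induction k generalizing v with
  | zero => rfl
  | succ k ih =>
    have ih' : ∀ a : RNodes ρ,
        colr (reductE E (colr E g D) ρ) (reductG g ρ) k a = colr E g k a.val := fun a =>
      calc _ = colr (reductE E (colr E g D) ρ) (reductG g ρ) k (toRNodes ρ a.val) := by
            rw [hρ.toRNodes_val]
        _ = colr E g k a.val := by rw [ih (by omega), hρ.apply_val]
    refine Prod.ext (ih (by omega) v) ?_
    calc _ = (inc (reductE E (colr E g D) ρ) (toRNodes ρ v)).map (fun a => colr E g k a.val) :=
          Multiset.map_congr rfl fun a _ => ih' a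
      _ = _ := hρ.map_inc_reductE E (fun _ _ h => colr_eq_of_le E g (by omega) h) v

theorem IsSubstWith.colr_reduct_toRNodes_of_le (hρ : IsSubstWith (colr E g D) ρ) {k : ℕ}
    (hk : k ≤ D) (v : V) :
    colr (reductE E (colr E g D) ρ) (reductG g ρ) k (toRNodes ρ v) = colr E g k v :=
  (hρ.colr_reduct_toRNodes E g (by omega) v).trans (colr_eq_of_le E g hk (hρ.1 v))

theorem IsSubstWith.colr_reduct_toRNodes_of_stableAt (hρ : IsSubstWith (colr E g D) ρ)
    (hD : stableAt E g D) (k : ℕ) (hk : k ≤ D + 1) (v : V) :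
    colr (reductE E (colr E g D) ρ) (reductG g ρ) k (toRNodes ρ v) = colr E g k v := by
  rcases hk.lt_or_eq with hk | rfl
  · exact hρ.colr_reduct_toRNodes_of_le E g (Nat.lt_succ_iff.mp hk) v
  · exact (hρ.colr_reduct_toRNodes E g le_rfl v).trans ((hD _ _).mp (hρ.1 v))

end ReducedColorRefinement

theorem colr_reduct_eq_general {V Y : Type*} [Fintype V] (E : V → V → ℕ)
    (g : V → Y) (d : ℕ∞) (ρ : V → V) (hρ : IsSubstWith (colrE' E g d) ρ) (v : V) :
    HEq (colrE' E g d v)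
      (colrE' (reductE E (colrE' E g d) ρ) (reductG g ρ) d (⟨ρ v, v, rfl⟩ : RNodes ρ)) := by
  induction d using ENat.recTopCoe with
  | coe n =>
    simp only [colrE', edepth_coe] at hρ ⊢
    exact heq_of_eq (hρ.colr_reduct_toRNodes_of_le E g le_rfl v).symm
  | top =>
    simp only [colrE', edepth_top] at hρ ⊢
    set D := stableNum E g
    have hcomp := hρ.colr_reduct_toRNodes_of_stableAt E g (stableAt_stableNum E g)
    have hnum : stableNum (reductE E (colr E g D) ρ) (reductG g ρ) = D :=
      stableNum_eq_of_stableAt_iff E g _ _ fun k hk =>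
        stableAt_iff_of_surjective E g _ _ (toRNodes_surjective ρ) (hcomp k (by omega))
          (hcomp (k + 1) (by omega))
    rw [hnum]
    exact heq_of_eq (hcomp D (by omega) v).symm

/-- `colr^d(G)(v) = colr^d(G/ρ)(ρ(v))` for every `d ∈ ℕ∞` and
`d`-substitution `ρ` (`HEq` since for `d = ∞` the two stable colorings live at
the respective stable coloring numbers). -/
theorem colr_reduct_eq {V Y : Type*} [Fintype V] [DecidableEq V] (E : V → V → ℕ)
    (g : V → Y) (d : ℕ∞) (ρ : V → V) (hρ : IsSubstWith (colrE' E g d) ρ) (v : V) :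
    HEq (colrE' E g d v)
      (colrE' (reductE E (colrE' E g d) ρ) (reductG g ρ) d (⟨ρ v, v, rfl⟩ : RNodes ρ)) :=
  colr_reduct_eq_general E g d ρ hρ v
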